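/- A finite simple graph G is 3-colorable if and only if there exist 3-dimensional quantum states ρ_{y,z} (one for each vertex y of G' and each z ∈ {1,2,3}) and, for each vertex y' of G', a 3-dimensional POVM (E_{y',1}, E_{y',2}, E_{y',3}) such that the matrix with entries p_{(y,z),(y',z')} = tr(ρ_{y,z} E_{y',z'}) fits Δ(G'). -/

import Mathlib

/-!
For positive semidefinite `A, B`, `tr (A B) = 0` forces `A B = 0`. Hence in a quantum realisation
of `Δ(G')` the triangle at `y` forces `ρ_{y,0} E_{y,0} = ρ_{y,0}`, and on an edge `{y, y'}` of `G'`
we get `ρ_{y,0} ρ_{y',0} = ρ_{y,0} E_{y',0} ρ_{y',0} = 0`: nonzero vectors in the ranges of the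
states `ρ_{y,0}` form an orthogonal representation of `G'` in `ℂ³`. In dimension three the gadget
`H_{ij}` forces the vectors of `i` and `j` to be orthogonal or parallel, so distinct lines spanned
by the vectors of vertices of `G` are orthogonal, hence at most three, and they colour `G`.
Conversely a 3-colouring `c` of `G` extends to `G'`, and the classical states and measurements
`|c(y) + z⟩⟨c(y) + z|` realise `Δ(G')`.
-/

open Matrix
open scoped ComplexOrder

/-- Vertices of the graph `G'`: the original vertices of `G` together with, for every
pair `{i,j}` of distinct vertices (represented as `i < j`), four new gadget vertices
`a_{ij}, b_{ij}, c_{ij}, d_{ij}` encoded as `Fin 4` (`0 = a`, `1 = b`, `2 = c`, `3 = d`). -/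
abbrev GVert (n : ℕ) := Fin n ⊕ ({p : Fin n × Fin n // p.1 < p.2} × Fin 4)

/-- The edges of `G'`: the original edges of `G`, and for every pair `i < j` the nine
gadget edges `{i,a},{i,b},{i,d},{a,b},{a,j},{b,c},{c,d},{c,j},{d,j}`. -/
def gadgetRel {n : ℕ} (G : SimpleGraph (Fin n)) : GVert n → GVert n → Prop
  | Sum.inl i, Sum.inl j => G.Adj i j
  | Sum.inl v, Sum.inr (⟨(i, j), _⟩, k) =>
      (v = i ∧ (k = 0 ∨ k = 1 ∨ k = 3)) ∨ (v = j ∧ (k = 0 ∨ k = 2 ∨ k = 3))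
  | Sum.inr (p, k), Sum.inr (q, l) =>
      p = q ∧ ((k = 0 ∧ l = 1) ∨ (k = 1 ∧ l = 2) ∨ (k = 2 ∧ l = 3))
  | _, _ => False

/-- The graph `G'` obtained from `G` by inserting the gadget `H_{ij}` for every pair of
distinct vertices `i, j` of `G`. -/
def gadgetGraph {n : ℕ} (G : SimpleGraph (Fin n)) : SimpleGraph (GVert n) :=
  SimpleGraph.fromRel (gadgetRel G)

/-- The triangle decoration `Δ(H)` of a graph `H`: each vertex `w` becomes the triangle
`(w,1),(w,2),(w,3)` (here `(w,0),(w,1),(w,2)`), with `(w,0)` identified with `w`. -/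
def triDec {W : Type*} (H : SimpleGraph W) : SimpleGraph (W × Fin 3) :=
  SimpleGraph.fromRel fun a b =>
    (a.2 = 0 ∧ b.2 = 0 ∧ H.Adj a.1 b.1) ∨ (a.1 = b.1 ∧ a.2 ≠ b.2)

/-- A matrix `A` fits a graph `H` if all its diagonal entries are `1` and `A v w = 0`
whenever `{v,w}` is an edge of `H`. -/
def Fits {V R : Type*} [Zero R] [One R] (H : SimpleGraph V) (A : Matrix V V R) : Prop :=
  (∀ v, A v v = 1) ∧ ∀ v w, H.Adj v w → A v w = 0

/-- A `d`-dimensional quantum state: a positive semidefinite complex `d × d` matrix of trace 1. -/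
def IsState {d : ℕ} (ρ : Matrix (Fin d) (Fin d) ℂ) : Prop :=
  ρ.PosSemidef ∧ ρ.trace = 1

/-- A `d`-dimensional POVM with `Z` outcomes: positive semidefinite complex `d × d` matrices
summing to the identity. -/
def IsPOVM {d Z : ℕ} (E : Fin Z → Matrix (Fin d) (Fin d) ℂ) : Prop :=
  (∀ z, (E z).PosSemidef) ∧ ∑ z, E z = 1

open Module Submodule
open scoped InnerProductSpace

section

open scoped MatrixOrder

theorem Matrix.PosSemidef.mul_eq_zero_of_trace_mul_eq_zero {m 𝕜 : Type*} [Fintype m] [RCLike 𝕜]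
    {A B : Matrix m m 𝕜} (hA : A.PosSemidef) (hB : B.PosSemidef) (h : (A * B).trace = 0) :
    A * B = 0 := by
  classical
  obtain ⟨X, rfl⟩ := CStarAlgebra.nonneg_iff_eq_star_mul_self.mp hA.nonneg
  obtain ⟨Y, rfl⟩ := CStarAlgebra.nonneg_iff_eq_star_mul_self.mp hB.nonneg
  have hYX : Y * Xᴴ = 0 := by
    rw [← trace_conjTranspose_mul_self_eq_zero_iff, ← h]
    simp only [star_eq_conjTranspose, conjTranspose_mul, conjTranspose_conjTranspose,
      Matrix.mul_assoc]
    rw [trace_mul_comm Xᴴ]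
    simp only [Matrix.mul_assoc]
  calc star X * X * (star Y * Y) = Xᴴ * (Y * Xᴴ)ᴴ * Y := by
        simp only [star_eq_conjTranspose, conjTranspose_mul, conjTranspose_conjTranspose,
          Matrix.mul_assoc]
    _ = 0 := by rw [hYX, conjTranspose_zero, Matrix.mul_zero, Matrix.zero_mul]

end

theorem mul_eq_self_of_sum_eq_one {ι R : Type*} [Fintype ι] [Semiring R]
    {E : ι → R} (hE : ∑ z, E z = 1) {ρ : R} {z : ι} (h : ∀ z' ≠ z, ρ * E z' = 0) :
    ρ * E z = ρ := by
  rw [← Fintype.sum_eq_single z h, ← Finset.mul_sum, hE, mul_one]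

theorem Matrix.IsHermitian.inner_mulVec_mulVec_eq_zero {m 𝕜 : Type*} [Fintype m] [RCLike 𝕜]
    {A B : Matrix m m 𝕜} (hA : A.IsHermitian) (hAB : A * B = 0) (x y : m → 𝕜) :
    inner 𝕜 (WithLp.toLp 2 (A *ᵥ x)) (WithLp.toLp 2 (B *ᵥ y)) = 0 := by
  rw [EuclideanSpace.inner_toLp_toLp, dotProduct_comm, star_mulVec, ← dotProduct_mulVec,
    mulVec_mulVec, hA.eq, hAB, zero_mulVec, dotProduct_zero]

theorem Matrix.exists_mulVec_ne_zero {m n R : Type*} [Fintype n] [Semiring R] {A : Matrix m n R}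
    (hA : A ≠ 0) : ∃ x, A *ᵥ x ≠ 0 := by
  contrapose! hA
  exact ext_iff_mulVec.mpr fun x => by rw [hA, zero_mulVec]

section Geometry

variable {𝕜 E : Type*} [RCLike 𝕜] [NormedAddCommGroup E] [InnerProductSpace 𝕜 E]

theorem linearIndependent_pair_of_inner_eq_zero {x y : E} (hx : x ≠ 0) (hy : y ≠ 0)
    (hxy : ⟪x, y⟫_𝕜 = 0) : LinearIndependent 𝕜 ![x, y] := by
  refine linearIndependent_of_ne_zero_of_inner_eq_zero (Fin.forall_fin_two.mpr ⟨hx, hy⟩) ?_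
  intro i j hij
  fin_cases i <;> fin_cases j <;> simp_all [inner_eq_zero_symm]

theorem mem_span_singleton_of_inner_eq_zero (hE : finrank 𝕜 E = 3) {u w x y : E}
    (huw : LinearIndependent 𝕜 ![u, w]) (hux : ⟪u, x⟫_𝕜 = 0) (hwx : ⟪w, x⟫_𝕜 = 0)
    (huy : ⟪u, y⟫_𝕜 = 0) (hwy : ⟪w, y⟫_𝕜 = 0) (hy : y ≠ 0) : x ∈ 𝕜 ∙ y := by
  have : FiniteDimensional 𝕜 E := Module.finite_of_finrank_eq_succ hE
  set K := span 𝕜 (Set.range ![u, w])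
  have hK : finrank 𝕜 Kᗮ = 1 := by
    have h2 : finrank 𝕜 K = 2 := by rw [finrank_span_eq_card huw, Fintype.card_fin]
    have := K.finrank_add_finrank_orthogonal
    omega
  have mem : ∀ z : E, ⟪u, z⟫_𝕜 = 0 → ⟪w, z⟫_𝕜 = 0 → z ∈ Kᗮ := by
    intro z hu hw
    rw [mem_orthogonal]
    intro a ha
    refine mem_orthogonal_singleton_iff_inner_left.mp (span_le.mpr ?_ ha)
    rintro _ ⟨i, rfl⟩
    fin_cases i <;> simpa [mem_orthogonal_singleton_iff_inner_left]
  obtain ⟨c, hc⟩ := (finrank_eq_one_iff_of_nonzero' (⟨y, mem y huy hwy⟩ : Kᗮ)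
    (by simpa using hy)).mp hK ⟨x, mem x hux hwx⟩
  exact mem_span_singleton.mpr ⟨c, congrArg Subtype.val hc⟩

theorem inner_eq_zero_or_span_eq_of_gadget (hE : finrank 𝕜 E = 3) {vi vj va vb vc vd : E}
    (hi : vi ≠ 0) (hj : vj ≠ 0) (ha : va ≠ 0) (hb : vb ≠ 0) (hc : vc ≠ 0) (hd : vd ≠ 0)
    (hia : ⟪vi, va⟫_𝕜 = 0) (hib : ⟪vi, vb⟫_𝕜 = 0) (hid : ⟪vi, vd⟫_𝕜 = 0)
    (hab : ⟪va, vb⟫_𝕜 = 0) (hja : ⟪vj, va⟫_𝕜 = 0) (hbc : ⟪vb, vc⟫_𝕜 = 0)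
    (hcd : ⟪vc, vd⟫_𝕜 = 0) (hjc : ⟪vj, vc⟫_𝕜 = 0) (hjd : ⟪vj, vd⟫_𝕜 = 0) :
    ⟪vi, vj⟫_𝕜 = 0 ∨ (𝕜 ∙ vi) = (𝕜 ∙ vj) := by
  by_cases hij : LinearIndependent 𝕜 ![vi, vj]
  · -- `va` and `vd` span the line orthogonal to `vi, vj`, so `vc ⊥ va`; then `vi` and `vc` both
    -- span the line orthogonal to `va, vb`.
    left
    obtain ⟨μ, hμ⟩ := mem_span_singleton.mp
      (mem_span_singleton_of_inner_eq_zero hE hij hia hja hid hjd hd)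
    have hca : ⟪va, vc⟫_𝕜 = 0 := by
      rw [inner_eq_zero_symm, ← hμ, inner_smul_right, hcd, mul_zero]
    obtain ⟨ν, hν⟩ := mem_span_singleton.mp
      (mem_span_singleton_of_inner_eq_zero hE (linearIndependent_pair_of_inner_eq_zero ha hb hab)
        (inner_eq_zero_symm.mp hia) (inner_eq_zero_symm.mp hib) hca hbc hc)
    rw [← hν, inner_smul_left, inner_eq_zero_symm.mp hjc, mul_zero]
  · right
    obtain ⟨μ, rfl⟩ : ∃ μ : 𝕜, μ • vi = vj := by
      simpa [LinearIndependent.pair_iff' hi] using hij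
    have hμ : μ ≠ 0 := by rintro rfl; simp at hj
    rw [span_singleton_smul_eq (IsUnit.mk0 μ hμ)]

end Geometry

namespace SimpleGraph

/-- Adjacent vertices get orthogonal vectors (in Lovász's convention it is non-adjacent ones). -/
structure IsOrthogonalRepresentation (𝕜 : Type*) {V E : Type*} [RCLike 𝕜] [NormedAddCommGroup E]
    [InnerProductSpace 𝕜 E] (G : SimpleGraph V) (v : V → E) : Prop where
  ne_zero : ∀ x, v x ≠ 0
  inner_eq_zero : ∀ ⦃x y⦄, G.Adj x y → ⟪v x, v y⟫_𝕜 = 0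

namespace IsOrthogonalRepresentation

variable {V W 𝕜 E : Type*} [RCLike 𝕜] [NormedAddCommGroup E] [InnerProductSpace 𝕜 E]
  {G : SimpleGraph V} {H : SimpleGraph W} {v : W → E}

theorem comp (hv : H.IsOrthogonalRepresentation 𝕜 v) (f : G →g H) :
    G.IsOrthogonalRepresentation 𝕜 (v ∘ f) :=
  ⟨fun _ => hv.ne_zero _, fun _ _ h => hv.inner_eq_zero (f.map_adj h)⟩

theorem colorable [FiniteDimensional 𝕜 E] (hv : H.IsOrthogonalRepresentation 𝕜 v)
    (hlines : ∀ x y, x ≠ y → ⟪v x, v y⟫_𝕜 = 0 ∨ (𝕜 ∙ v x) = (𝕜 ∙ v y)) :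
    H.Colorable (finrank 𝕜 E) := by
  set line : W → Submodule 𝕜 E := fun x => 𝕜 ∙ v x
  have hadj : ∀ ⦃x y⦄, H.Adj x y → line x ≠ line y := by
    intro x y hxy hline
    refine hv.ne_zero y ((orthogonal_disjoint (𝕜 ∙ v x)).le_bot ⟨?_, ?_⟩)
    · change v y ∈ line x
      rw [hline]
      exact mem_span_singleton_self (v y)
    · exact mem_orthogonal_singleton_iff_inner_right.mpr (hv.inner_eq_zero hxy)
  choose rep hrep using fun L : Set.range line => L.2
  have hind : LinearIndependent 𝕜 fun L => v (rep L) := by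
    refine linearIndependent_of_ne_zero_of_inner_eq_zero (fun _ => hv.ne_zero _) ?_
    intro L L' hLL'
    have hne : line (rep L) ≠ line (rep L') := by
      rw [hrep, hrep]
      exact fun h => hLL' (Subtype.ext h)
    exact (hlines _ _ fun h => hne (congrArg line h)).resolve_right hne
  have := hind.finite
  have := Fintype.ofFinite (Set.range line)
  exact (Coloring.mk (Set.rangeFactorization line)
    fun h heq => hadj h (congrArg Subtype.val heq)).colorable.mono hind.fintype_card_le_finrank

end IsOrthogonalRepresentation

end SimpleGraph

theorem SimpleGraph.ne_of_fromRel_adj {V α : Type*} {r : V → V → Prop} {f : V → α}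
    (hf : ∀ a b, r a b → f a ≠ f b) {a b : V} (h : (SimpleGraph.fromRel r).Adj a b) :
    f a ≠ f b := by
  rcases ((SimpleGraph.fromRel_adj r a b).mp h).2 with h | h
  · exact hf a b h
  · exact (hf b a h).symm

section TriangleDecoration

variable {W : Type*} {H : SimpleGraph W}

theorem triDec_adj_of_ne {w : W} {z z' : Fin 3} (h : z ≠ z') : (triDec H).Adj (w, z) (w, z') := by
  rw [triDec, SimpleGraph.fromRel_adj]
  exact ⟨by simp [h], Or.inl (Or.inr ⟨rfl, h⟩)⟩

theorem triDec_adj_of_adj {w w' : W} (h : H.Adj w w') : (triDec H).Adj (w, 0) (w', 0) := by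
  rw [triDec, SimpleGraph.fromRel_adj]
  exact ⟨by simp [h.ne], Or.inl (Or.inl ⟨rfl, rfl, h⟩)⟩

theorem exists_isOrthogonalRepresentation_of_fits {d : ℕ}
    {ρ E : W → Fin 3 → Matrix (Fin d) (Fin d) ℂ} (hρ : ∀ y z, IsState (ρ y z))
    (hE : ∀ y, IsPOVM (E y))
    (hfit : Fits (triDec H) (Matrix.of fun a b : W × Fin 3 => (ρ a.1 a.2 * E b.1 b.2).trace)) :
    ∃ v : W → EuclideanSpace ℂ (Fin d), H.IsOrthogonalRepresentation ℂ v := by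
  have hzero : ∀ a b, (triDec H).Adj a b → ρ a.1 a.2 * E b.1 b.2 = 0 := fun a b h =>
    (hρ a.1 a.2).1.mul_eq_zero_of_trace_mul_eq_zero ((hE b.1).1 b.2) (hfit.2 a b h)
  have hfix : ∀ y, E y 0 * ρ y 0 = ρ y 0 := by
    intro y
    have := congrArg conjTranspose <| mul_eq_self_of_sum_eq_one (hE y).2 fun z hz =>
      hzero (y, 0) (y, z) (triDec_adj_of_ne hz.symm)
    rwa [conjTranspose_mul, (hρ y 0).1.isHermitian.eq, ((hE y).1 0).isHermitian.eq] at this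
  have hprod : ∀ ⦃y y'⦄, H.Adj y y' → ρ y 0 * ρ y' 0 = 0 := by
    intro y y' h
    rw [← hfix y', ← Matrix.mul_assoc, hzero (y, 0) (y', 0) (triDec_adj_of_adj h), Matrix.zero_mul]
  have hne : ∀ y, ρ y 0 ≠ 0 := fun y h => by simpa [h] using (hρ y 0).2
  choose x hx using fun y => exists_mulVec_ne_zero (hne y)
  refine ⟨fun y => WithLp.toLp 2 (ρ y 0 *ᵥ x y), fun y => by simpa using hx y, fun y y' h => ?_⟩
  exact (hρ y 0).1.isHermitian.inner_mulVec_mulVec_eq_zero (hprod h) _ _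

end TriangleDecoration

section GadgetGraph

variable {n : ℕ} {G : SimpleGraph (Fin n)}

theorem gadgetGraph_adj {a b : GVert n} (h : gadgetRel G a b) : (gadgetGraph G).Adj a b := by
  rw [gadgetGraph, SimpleGraph.fromRel_adj]
  refine ⟨?_, Or.inl h⟩
  rintro rfl
  rcases a with i | ⟨p, k⟩
  · exact G.irrefl h
  · fin_cases k <;> simp [gadgetRel] at h

def gadgetGraphHom (G : SimpleGraph (Fin n)) : G →g gadgetGraph G :=
  ⟨Sum.inl, fun h => gadgetGraph_adj h⟩

theorem SimpleGraph.IsOrthogonalRepresentation.inner_eq_zero_or_span_eq_of_gadgetGraph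
    {𝕜 E : Type*} [RCLike 𝕜] [NormedAddCommGroup E] [InnerProductSpace 𝕜 E]
    (hE : finrank 𝕜 E = 3) {v : GVert n → E} (hv : (gadgetGraph G).IsOrthogonalRepresentation 𝕜 v)
    {i j : Fin n} (hij : i ≠ j) :
    ⟪v (.inl i), v (.inl j)⟫_𝕜 = 0 ∨ (𝕜 ∙ v (.inl i)) = (𝕜 ∙ v (.inl j)) := by
  wlog hlt : i < j generalizing i j
  · exact (this hij.symm (lt_of_le_of_ne (not_lt.mp hlt) hij.symm)).imp
      inner_eq_zero_symm.mp Eq.symm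
  have e : ∀ a b, gadgetRel G a b → ⟪v a, v b⟫_𝕜 = 0 := fun _ _ h =>
    hv.inner_eq_zero (gadgetGraph_adj h)
  let q : {p : Fin n × Fin n // p.1 < p.2} := ⟨(i, j), hlt⟩
  refine inner_eq_zero_or_span_eq_of_gadget hE (va := v (.inr (q, 0)))
    (vb := v (.inr (q, 1))) (vc := v (.inr (q, 2))) (vd := v (.inr (q, 3)))
    (hv.ne_zero _) (hv.ne_zero _) (hv.ne_zero _) (hv.ne_zero _) (hv.ne_zero _) (hv.ne_zero _)
    (e _ _ ?_) (e _ _ ?_) (e _ _ ?_) (e _ _ ?_) (e _ _ ?_) (e _ _ ?_) (e _ _ ?_) (e _ _ ?_)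
    (e _ _ ?_)
  all_goals simp [gadgetRel, q]

-- When `x ≠ y`, `-(x + y)` is the third colour.
def gadgetColor (x y : Fin 3) (k : Fin 4) : Fin 3 :=
  if x = y then (if k = 0 ∨ k = 2 then x + 1 else x + 2)
  else (if k = 1 then y else if k = 2 then x else -(x + y))

theorem gadgetColor_ne_left : ∀ (x y : Fin 3) (k : Fin 4), (k = 0 ∨ k = 1 ∨ k = 3) →
    x ≠ gadgetColor x y k := by decide

theorem gadgetColor_ne_right : ∀ (x y : Fin 3) (k : Fin 4), (k = 0 ∨ k = 2 ∨ k = 3) →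
    y ≠ gadgetColor x y k := by decide

theorem gadgetColor_ne : ∀ (x y : Fin 3) (k l : Fin 4),
    ((k = 0 ∧ l = 1) ∨ (k = 1 ∧ l = 2) ∨ (k = 2 ∧ l = 3)) →
    gadgetColor x y k ≠ gadgetColor x y l := by decide

theorem gadgetGraph_colorable (hG : G.Colorable 3) : (gadgetGraph G).Colorable 3 := by
  obtain ⟨c⟩ := hG
  refine ⟨.mk (Sum.elim c fun qk => gadgetColor (c qk.1.1.1) (c qk.1.1.2) qk.2)
    (SimpleGraph.ne_of_fromRel_adj ?_)⟩
  rintro (i | ⟨⟨⟨i, j⟩, hij⟩, k⟩) (i' | ⟨⟨⟨i', j'⟩, hij'⟩, l⟩) h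
  · exact c.valid h
  · rcases h with ⟨rfl, hl⟩ | ⟨rfl, hl⟩
    · exact gadgetColor_ne_left _ _ _ hl
    · exact gadgetColor_ne_right _ _ _ hl
  · exact h.elim
  · obtain ⟨hq, hkl⟩ := h
    obtain ⟨rfl, rfl⟩ := Prod.ext_iff.mp (congrArg Subtype.val hq)
    exact gadgetColor_ne _ _ _ _ hkl

end GadgetGraph

section Witness

variable {d : ℕ}

theorem isState_single (t : Fin d) : IsState (single t t (1 : ℂ)) := by
  refine ⟨?_, by simp⟩
  rw [← diagonal_single]
  refine posSemidef_diagonal_iff.mpr fun i => ?_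
  by_cases h : i = t <;> simp [h]

theorem isPOVM_single_comp (e : Fin d ≃ Fin d) : IsPOVM fun z => single (e z) (e z) (1 : ℂ) :=
  ⟨fun z => (isState_single _).1, by rw [e.sum_comp fun t => single t t 1, sum_single_one]⟩

theorem trace_single_mul_single (s t : Fin d) :
    (single s s (1 : ℂ) * single t t 1).trace = if s = t then 1 else 0 := by
  by_cases h : s = t
  · simp [h]
  · simp [h, single_mul_single_of_ne]

theorem exists_fits_triDec_of_colorable {W : Type*} {H : SimpleGraph W} (hH : H.Colorable 3) :
    ∃ ρ E : W → Fin 3 → Matrix (Fin 3) (Fin 3) ℂ,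
      (∀ y z, IsState (ρ y z)) ∧ (∀ y, IsPOVM (E y)) ∧
      Fits (triDec H) (Matrix.of fun a b : W × Fin 3 => (ρ a.1 a.2 * E b.1 b.2).trace) := by
  obtain ⟨c⟩ := hH
  have hc : ∀ a b, (triDec H).Adj a b → c a.1 + a.2 ≠ c b.1 + b.2 := by
    intro a b
    refine SimpleGraph.ne_of_fromRel_adj (f := fun a : W × Fin 3 => c a.1 + a.2) ?_
    rintro ⟨w, z⟩ ⟨w', z'⟩ (⟨rfl, rfl, h⟩ | ⟨rfl, h⟩)
    · simpa using c.valid h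
    · simpa using h
  refine ⟨fun w z => single (c w + z) (c w + z) 1, fun w z => single (c w + z) (c w + z) 1,
    fun _ _ => isState_single _, fun w => isPOVM_single_comp (Equiv.addLeft (c w)),
    fun a => by simp [trace_single_mul_single],
    fun a b h => by simp [trace_single_mul_single, hc a b h]⟩

end Witness

theorem stmt4 {n : ℕ} (G : SimpleGraph (Fin n)) :
    G.Colorable 3 ↔
      ∃ (ρ : GVert n → Fin 3 → Matrix (Fin 3) (Fin 3) ℂ)
        (E : GVert n → Fin 3 → Matrix (Fin 3) (Fin 3) ℂ),
        (∀ y z, IsState (ρ y z)) ∧ (∀ y', IsPOVM (E y')) ∧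
        Fits (triDec (gadgetGraph G))
          (Matrix.of fun a b : GVert n × Fin 3 => (ρ a.1 a.2 * E b.1 b.2).trace) := by
  refine ⟨fun hG => exists_fits_triDec_of_colorable (gadgetGraph_colorable hG), ?_⟩
  rintro ⟨ρ, E, hρ, hE, hfit⟩
  obtain ⟨v, hv⟩ := exists_isOrthogonalRepresentation_of_fits hρ hE hfit
  have h3 : finrank ℂ (EuclideanSpace ℂ (Fin 3)) = 3 := finrank_euclideanSpace_fin
  rw [← h3]
  exact (hv.comp (gadgetGraphHom G)).colorable fun i j hij =>
    hv.inner_eq_zero_or_span_eq_of_gadgetGraph h3 hij
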